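/- arXiv:1806.02926 — 2 statements merged into one kernel-verified Lean document; each statement's English description precedes it below -/
import Mathlib

section
/- Leibniz rule for differentiation under the Pettis integral: let E be a quasi-complete locally convex Hausdorff space (or a Banach space), (X,Σ,μ) a measure space, T ⊂ ℝ^d open, f : X × T → E with (a) f(·,t) Pettis-integrable on Σ for all t, (b) f(x,·) ∈ C¹(T,E) for all x outside a μ-null set N₀, and (c) for each coordinate direction j there is a Pettis-integrable ψ_j such that for every e' ∈ E' one has |∂_{t_j}⟨e', f(x,·)⟩| ≤ |⟨e', ψ_j(x)⟩| on T for μ-a.e. x ∉ N₀. Then g_Λ(t) := ∫_Λ f(x,t) dμ(x) is C¹ on T and ∂_{t_j} g_Λ(t) = ∫_Λ ∂_{t_j} f(x,t) dμ(x) for all t ∈ T and Λ ∈ Σ. -/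
/-!
Strong domination of the partial derivatives is recovered from the weak one: for each fixed
parameter the values of `∂ⱼ f(·, t)` lie a.e. in a separable subspace, on which countably many
functionals of norm at most one compute the norm, so that countably many a.e. inequalities
suffice; continuity in `t` then passes from a countable dense set of parameters to
all of `T`. With the norm of `D f(x, t)` bounded by an integrable function, the Bochner integral
is differentiated by dominated convergence.
-/

open MeasureTheory
open scoped BigOperators

noncomputable def pD {d : ℕ} {E : Type*} [NormedAddCommGroup E] [NormedSpace ℝ E]
    (i : Fin d) (f : EuclideanSpace ℝ (Fin d) → E) : EuclideanSpace ℝ (Fin d) → E :=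
  fun x => fderiv ℝ f x (EuclideanSpace.single i (1 : ℝ))

/-- Iterated partial derivative `∂^β f` for a multi-index `β : Fin d → ℕ`. -/
noncomputable def mD {d : ℕ} {E : Type*} [NormedAddCommGroup E] [NormedSpace ℝ E]
    (β : Fin d → ℕ) (f : EuclideanSpace ℝ (Fin d) → E) : EuclideanSpace ℝ (Fin d) → E :=
  Fin.foldr d (fun i g => (pD i)^[β i] g) f

section LeibnizRule

open Filter Topology TopologicalSpace

variable {X : Type*} [MeasurableSpace X] {μ : Measure X}
  {E : Type*} [NormedAddCommGroup E] [NormedSpace ℝ E]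
  {E' : Type*} [NormedAddCommGroup E'] [NormedSpace ℝ E']

theorem TopologicalSpace.IsSeparable.exists_seq_dual_norm_le {S : Set E} (hS : IsSeparable S) :
    ∃ e' : ℕ → E →L[ℝ] ℝ, (∀ k, ‖e' k‖ ≤ 1) ∧
      ∀ v ∈ S, ∀ c : ℝ, (∀ k, |e' k v| ≤ c) → ‖v‖ ≤ c := by
  rcases S.eq_empty_or_nonempty with rfl | ⟨v₀, hv₀⟩
  · exact ⟨0, by simp, by simp⟩
  have := hS.separableSpace
  have : Nonempty S := ⟨⟨v₀, hv₀⟩⟩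
  obtain ⟨u, hu⟩ := exists_dense_seq S
  choose e' he'_norm he'_eq using fun k => exists_dual_vector'' ℝ (u k : E)
  refine ⟨e', he'_norm, fun v hv c hc => le_of_forall_pos_le_add fun ε hε => ?_⟩
  obtain ⟨k, hk⟩ := hu.exists_dist_lt ⟨v, hv⟩ (half_pos hε)
  rw [Subtype.dist_eq, dist_eq_norm] at hk
  have hek : ‖e' k (v - u k)‖ ≤ ‖v - u k‖ := by
    simpa using (e' k).le_of_opNorm_le (he'_norm k) (v - u k)
  calc ‖v‖ ≤ ‖(u k : E)‖ + ‖v - u k‖ := norm_le_norm_add_norm_sub' _ _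
    _ = e' k v - e' k (v - u k) + ‖v - u k‖ := by simp [he'_eq]
    _ ≤ |e' k v| + ‖e' k (v - u k)‖ + ‖v - u k‖ := by
        gcongr
        exact (le_abs_self _).trans (abs_sub _ _)
    _ ≤ c + ε / 2 + ε / 2 := by gcongr; exacts [hc k, hek.trans hk.le]
    _ = c + ε := by ring

theorem ae_norm_le_of_forall_dual {g ψ : X → E} (hg : AEStronglyMeasurable g μ)
    (h : ∀ e' : E →L[ℝ] ℝ, ∀ᵐ x ∂μ, |e' (g x)| ≤ |e' (ψ x)|) :
    ∀ᵐ x ∂μ, ‖g x‖ ≤ ‖ψ x‖ := by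
  obtain ⟨S, hS, hgS⟩ := hg.isSeparable_ae_range
  obtain ⟨e', he'_norm, he'⟩ := hS.exists_seq_dual_norm_le
  filter_upwards [hgS, ae_all_iff.2 fun k => h (e' k)] with x hxS hx
  refine he' _ hxS _ fun k => (hx k).trans ?_
  simpa using (e' k).le_of_opNorm_le (he'_norm k) (ψ x)

theorem ae_forall_norm_le_of_forall_dual {Y : Type*} [TopologicalSpace Y] [PseudoMetrizableSpace Y]
    {T : Set Y} (hT : IsSeparable T) {G : X → Y → E} {ψ : X → E}
    (hG_meas : ∀ t ∈ T, AEStronglyMeasurable (G · t) μ)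
    (hG_cont : ∀ᵐ x ∂μ, ContinuousOn (G x) T)
    (h : ∀ e' : E →L[ℝ] ℝ, ∀ᵐ x ∂μ, ∀ t ∈ T, |e' (G x t)| ≤ |e' (ψ x)|) :
    ∀ᵐ x ∂μ, ∀ t ∈ T, ‖G x t‖ ≤ ‖ψ x‖ := by
  obtain ⟨T₀, hT₀T, hT₀, hT₀_dense⟩ := hT.exists_countable_dense_subset
  have h₀ : ∀ᵐ x ∂μ, ∀ τ ∈ T₀, ‖G x τ‖ ≤ ‖ψ x‖ := (ae_ball_iff hT₀).2 fun τ hτ =>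
    ae_norm_le_of_forall_dual (hG_meas τ (hT₀T hτ)) fun e' => (h e').mono fun x hx => hx τ (hT₀T hτ)
  filter_upwards [h₀, hG_cont] with x hx hcont t ht
  exact ContinuousWithinAt.closure_le (hT₀_dense ht) ((hcont t ht).mono hT₀T).norm
    continuousWithinAt_const hx

theorem aestronglyMeasurable_fderiv_apply {F : X → E' → E} {t : E'}
    (hF : ∀ᶠ s in 𝓝 t, AEStronglyMeasurable (F · s) μ)
    (hd : ∀ᵐ x ∂μ, DifferentiableAt ℝ (F x) t) (v : E') :
    AEStronglyMeasurable (fun x => fderiv ℝ (F x) t v) μ := by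
  have hc : Tendsto (fun n : ℕ => (n : ℝ)) atTop atTop := tendsto_natCast_atTop_atTop
  have hlim : Tendsto (fun n : ℕ => t + (n : ℝ)⁻¹ • v) atTop (𝓝 t) := by
    simpa using tendsto_const_nhds.add ((tendsto_inv_atTop_zero.comp hc).smul_const v)
  -- `F · s` is only known to be measurable for `s` near `t`: start the difference quotients at `N`.
  obtain ⟨N, hN⟩ := eventually_atTop.1 (hlim.eventually hF)
  refine aestronglyMeasurable_of_tendsto_ae atTop
    (f := fun n x => ((n + N : ℕ) : ℝ) • (F x (t + ((n + N : ℕ) : ℝ)⁻¹ • v) - F x t))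
    (fun n => ((hN _ le_add_self).sub hF.self_of_nhds).const_smul _) ?_
  filter_upwards [hd] with x hx
  exact (hx.hasFDerivAt.lim v (tendsto_norm_atTop_atTop.comp hc)).comp (tendsto_add_atTop_nat N)

theorem Module.Basis.aestronglyMeasurable_clm {ι : Type*} [Fintype ι] (b : Basis ι ℝ E')
    {L : X → E' →L[ℝ] E} (h : ∀ i, AEStronglyMeasurable (fun x => L x (b i)) μ) :
    AEStronglyMeasurable L μ := by
  let coord i : E' →L[ℝ] ℝ := (ContinuousLinearMap.proj i).comp b.equivFunL.toContinuousLinearMap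
  have hL : L = fun x => ∑ i, (coord i).smulRight (L x (b i)) := by
    funext x
    refine ContinuousLinearMap.coe_injective (b.ext fun i => ?_)
    classical
    simp [coord, Finsupp.single_apply]
  rw [hL]
  exact Finset.aestronglyMeasurable_fun_sum _ fun i _ =>
    (ContinuousLinearMap.smulRightL ℝ E' E (coord i)).continuous.comp_aestronglyMeasurable (h i)

theorem aestronglyMeasurable_fderiv [FiniteDimensional ℝ E'] {F : X → E' → E} {t : E'}
    (hF : ∀ᶠ s in 𝓝 t, AEStronglyMeasurable (F · s) μ)
    (hd : ∀ᵐ x ∂μ, DifferentiableAt ℝ (F x) t) :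
    AEStronglyMeasurable (fun x => fderiv ℝ (F x) t) μ :=
  (Module.finBasis ℝ E').aestronglyMeasurable_clm fun _ => aestronglyMeasurable_fderiv_apply hF hd _

section DominatedDerivative

variable [FiniteDimensional ℝ E'] {T : Set E'} {F : X → E' → E} {bound : X → ℝ}

theorem aestronglyMeasurable_fderiv_of_contDiffOn (hT : IsOpen T)
    (hF_meas : ∀ t ∈ T, AEStronglyMeasurable (F · t) μ)
    (hF_diff : ∀ᵐ x ∂μ, ContDiffOn ℝ 1 (F x) T) {t : E'} (ht : t ∈ T) :
    AEStronglyMeasurable (fun x => fderiv ℝ (F x) t) μ :=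
  aestronglyMeasurable_fderiv (eventually_of_mem (hT.mem_nhds ht) hF_meas)
    (hF_diff.mono fun _ hx => (hx.differentiableOn one_ne_zero t ht).differentiableAt
      (hT.mem_nhds ht))

theorem hasFDerivAt_integral_of_fderiv_le (hT : IsOpen T)
    (hF_int : ∀ t ∈ T, Integrable (F · t) μ) (hF_diff : ∀ᵐ x ∂μ, ContDiffOn ℝ 1 (F x) T)
    (hbound : Integrable bound μ) (h_bound : ∀ᵐ x ∂μ, ∀ t ∈ T, ‖fderiv ℝ (F x) t‖ ≤ bound x)
    {t : E'} (ht : t ∈ T) :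
    HasFDerivAt (fun s => ∫ x, F x s ∂μ) (∫ x, fderiv ℝ (F x) t ∂μ) t :=
  hasFDerivAt_integral_of_dominated_of_fderiv_le (hT.mem_nhds ht)
    (eventually_of_mem (hT.mem_nhds ht) fun s hs => (hF_int s hs).aestronglyMeasurable)
    (hF_int t ht)
    (aestronglyMeasurable_fderiv_of_contDiffOn hT (fun s hs => (hF_int s hs).aestronglyMeasurable)
      hF_diff ht)
    h_bound hbound
    (hF_diff.mono fun _ hx _ hs =>
      ((hx.contDiffAt (hT.mem_nhds hs)).differentiableAt one_ne_zero).hasFDerivAt)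

theorem contDiffOn_integral_of_fderiv_le (hT : IsOpen T)
    (hF_int : ∀ t ∈ T, Integrable (F · t) μ) (hF_diff : ∀ᵐ x ∂μ, ContDiffOn ℝ 1 (F x) T)
    (hbound : Integrable bound μ) (h_bound : ∀ᵐ x ∂μ, ∀ t ∈ T, ‖fderiv ℝ (F x) t‖ ≤ bound x) :
    ContDiffOn ℝ 1 (fun t => ∫ x, F x t ∂μ) T := by
  have hderiv := fun t (ht : t ∈ T) =>
    hasFDerivAt_integral_of_fderiv_le hT hF_int hF_diff hbound h_bound ht
  rw [show (1 : WithTop ℕ∞) = 0 + 1 from rfl, contDiffOn_succ_iff_fderiv_of_isOpen hT]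
  refine ⟨fun t ht => (hderiv t ht).differentiableAt.differentiableWithinAt, by simp, ?_⟩
  rw [contDiffOn_zero]
  refine ContinuousOn.congr ?_ fun t ht => (hderiv t ht).fderiv
  exact continuousOn_of_dominated
    (fun t => aestronglyMeasurable_fderiv_of_contDiffOn hT
      (fun s hs => (hF_int s hs).aestronglyMeasurable) hF_diff)
    (fun t ht => h_bound.mono fun x hx => hx t ht) hbound
    (hF_diff.mono fun x hx => hx.continuousOn_fderiv_of_isOpen hT le_rfl)

theorem fderiv_integral_apply_of_fderiv_le (hT : IsOpen T)
    (hF_int : ∀ t ∈ T, Integrable (F · t) μ) (hF_diff : ∀ᵐ x ∂μ, ContDiffOn ℝ 1 (F x) T)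
    (hbound : Integrable bound μ) (h_bound : ∀ᵐ x ∂μ, ∀ t ∈ T, ‖fderiv ℝ (F x) t‖ ≤ bound x)
    {t : E'} (ht : t ∈ T) (v : E') :
    fderiv ℝ (fun s => ∫ x, F x s ∂μ) t v = ∫ x, fderiv ℝ (F x) t v ∂μ := by
  have hF'_int : Integrable (fun x => fderiv ℝ (F x) t) μ :=
    hbound.mono' (aestronglyMeasurable_fderiv_of_contDiffOn hT
      (fun s hs => (hF_int s hs).aestronglyMeasurable) hF_diff ht)
      (h_bound.mono fun x hx => hx t ht)
  rw [(hasFDerivAt_integral_of_fderiv_le hT hF_int hF_diff hbound h_bound ht).fderiv,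
    ContinuousLinearMap.integral_apply hF'_int]

end DominatedDerivative

theorem pD_comp_clm {d : ℕ} {F : Type*} [NormedAddCommGroup F] [NormedSpace ℝ F]
    {f : EuclideanSpace ℝ (Fin d) → E} {t : EuclideanSpace ℝ (Fin d)}
    (hf : DifferentiableAt ℝ f t) (L : E →L[ℝ] F) (j : Fin d) :
    pD j (fun s => L (f s)) t = L (pD j f t) := by
  change fderiv ℝ (L ∘ f) t _ = _
  rw [(L.hasFDerivAt.comp t hf.hasFDerivAt).fderiv]
  rfl

theorem ae_forall_norm_pD_le_of_forall_dual {d : ℕ} {T : Set (EuclideanSpace ℝ (Fin d))}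
    (hT : IsOpen T) {F : X → EuclideanSpace ℝ (Fin d) → E}
    (hF_meas : ∀ t ∈ T, AEStronglyMeasurable (F · t) μ)
    (hF_diff : ∀ᵐ x ∂μ, ContDiffOn ℝ 1 (F x) T) (j : Fin d) {ψ : X → E}
    (h : ∀ e' : E →L[ℝ] ℝ, ∀ᵐ x ∂μ, ∀ t ∈ T, |pD j (fun s => e' (F x s)) t| ≤ |e' (ψ x)|) :
    ∀ᵐ x ∂μ, ∀ t ∈ T, ‖pD j (F x) t‖ ≤ ‖ψ x‖ := by
  refine ae_forall_norm_le_of_forall_dual (G := fun x t => pD j (F x) t)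
    (IsSeparable.of_separableSpace T)
    (fun t ht => (aestronglyMeasurable_fderiv_of_contDiffOn hT hF_meas hF_diff ht)
      |>.apply_continuousLinearMap _)
    (hF_diff.mono fun x hx => (hx.continuousOn_fderiv_of_isOpen hT le_rfl).clm_apply
      continuousOn_const) fun e' => ?_
  filter_upwards [h e', hF_diff] with x hx hxd t ht
  rw [← pD_comp_clm ((hxd.differentiableOn one_ne_zero t ht).differentiableAt (hT.mem_nhds ht))]
  exact hx t ht

end LeibnizRule

theorem stmt6_general {X : Type*} [MeasurableSpace X] (μ : Measure X)
    {d : ℕ} (T : Set (EuclideanSpace ℝ (Fin d))) (hT : IsOpen T)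
    {E : Type*} [NormedAddCommGroup E] [NormedSpace ℝ E]
    (f : X → EuclideanSpace ℝ (Fin d) → E)
    (ha : ∀ t ∈ T, Integrable (fun x => f x t) μ)
    (N₀ : Set X) (hN₀ : μ N₀ = 0)
    (hb : ∀ x ∉ N₀, ContDiffOn ℝ 1 (f x) T)
    (hc : ∀ j : Fin d, ∃ ψ : X → E, Integrable ψ μ ∧
      ∀ e' : E →L[ℝ] ℝ, ∀ᵐ x ∂μ, x ∉ N₀ →
        ∀ t ∈ T, |pD j (fun s => e' (f x s)) t| ≤ |e' (ψ x)|) :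
    ∀ Λ : Set X, MeasurableSet Λ →
      ContDiffOn ℝ 1 (fun t => ∫ x in Λ, f x t ∂μ) T ∧
      ∀ t ∈ T, ∀ j : Fin d,
        pD j (fun s => ∫ x in Λ, f x s ∂μ) t = ∫ x in Λ, pD j (f x) t ∂μ := by
  intro Λ _
  have hae : ∀ᵐ x ∂μ, x ∉ N₀ := measure_eq_zero_iff_ae_notMem.1 hN₀
  have hf : ∀ᵐ x ∂μ, ContDiffOn ℝ 1 (f x) T := hae.mono hb
  choose ψ hψ_int hψ using hc
  have hpD : ∀ j, ∀ᵐ x ∂μ, ∀ t ∈ T, ‖pD j (f x) t‖ ≤ ‖ψ j x‖ := fun j =>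
    ae_forall_norm_pD_le_of_forall_dual hT (fun t ht => (ha t ht).aestronglyMeasurable) hf j
      fun e' => by filter_upwards [hψ j e', hae] with x hx hx₀ using hx hx₀
  obtain ⟨C, -, hC⟩ := (EuclideanSpace.basisFun (Fin d) ℝ).toBasis.exists_opNorm_le (F := E)
  have hfderiv : ∀ᵐ x ∂μ, ∀ t ∈ T, ‖fderiv ℝ (f x) t‖ ≤ C * ∑ j, ‖ψ j x‖ := by
    filter_upwards [ae_all_iff.2 hpD] with x hx t ht
    refine hC (by positivity) fun j => ?_
    simpa [pD] using (hx j t ht).trans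
      (Finset.single_le_sum (fun j _ => norm_nonneg (ψ j x)) (Finset.mem_univ j))
  have hbound : Integrable (fun x => C * ∑ j, ‖ψ j x‖) μ :=
    (integrable_finsetSum _ fun j _ => (hψ_int j).norm).const_mul C
  have hf_int : ∀ t ∈ T, Integrable (f · t) (μ.restrict Λ) := fun t ht => (ha t ht).restrict
  exact ⟨contDiffOn_integral_of_fderiv_le hT hf_int (ae_restrict_of_ae hf) hbound.restrict
      (ae_restrict_of_ae hfderiv),
    fun t ht j => fderiv_integral_apply_of_fderiv_le hT hf_int (ae_restrict_of_ae hf)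
      hbound.restrict (ae_restrict_of_ae hfderiv) ht _⟩

/-- Leibniz' rule for differentiation under the (Bochner/Pettis)
integral sign. -/
theorem stmt6 {X : Type*} [MeasurableSpace X] (μ : Measure X)
    {d : ℕ} (T : Set (EuclideanSpace ℝ (Fin d))) (hT : IsOpen T)
    {E : Type*} [NormedAddCommGroup E] [NormedSpace ℝ E] [CompleteSpace E]
    (f : X → EuclideanSpace ℝ (Fin d) → E)
    (ha : ∀ t ∈ T, Integrable (fun x => f x t) μ)
    (N₀ : Set X) (hN₀ : μ N₀ = 0)
    (hb : ∀ x ∉ N₀, ContDiffOn ℝ 1 (f x) T)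
    (hc : ∀ j : Fin d, ∃ ψ : X → E, Integrable ψ μ ∧
      ∀ e' : E →L[ℝ] ℝ, ∀ᵐ x ∂μ, x ∉ N₀ →
        ∀ t ∈ T, |pD j (fun s => e' (f x s)) t| ≤ |e' (ψ x)|) :
    ∀ Λ : Set X, MeasurableSet Λ →
      ContDiffOn ℝ 1 (fun t => ∫ x in Λ, f x t ∂μ) T ∧
      ∀ t ∈ T, ∀ j : Fin d,
        pD j (fun s => ∫ x in Λ, f x s ∂μ) t = ∫ x in Λ, pD j (f x) t ∂μ :=
  stmt6_general μ T hT f ha N₀ hN₀ hb hc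
end

section
/- Cut-off density lemma: let E be a locally convex Hausdorff space (or a Banach space), k ∈ ℕ₀ ∪ {∞}, Ω ⊂ ℝ^d open, V^k a locally bounded family of weights, and suppose CV^k_0(Ω,E) satisfies the cut-off criterion: for every f ∈ CV^k_0(Ω,E), j, l, α there is δ > 0 such that for all ε > 0 there is a compact K ⊂ Ω with K + closed ball of radius δ ⊆ Ω and |f|_{Ω\K, j, l, α} < ε. Then C^k_c(Ω,E) is dense in CV^k_0(Ω,E). Specifically, for f, j, l, α, ε as above there is ψ ∈ C^∞_c(Ω) with 0 ≤ ψ ≤ 1, ψ = 1 near K, |∂^β ψ| ≤ C_β δ^{−|β|}, and then |f − ψf|_{j,l,α} ≤ (1 + C_{l,δ}) |f|_{Ω\K,j,l,α} where C_{l,δ} := sup_{|β|≤l} Σ_{γ≤β} (β choose γ) C_{β−γ} δ^{−|β−γ|}. -/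
open scoped BigOperators Pointwise

/-- Membership in the weighted space `CV^k_0(Ω,E)`: `C^k` on `Ω`, finite weighted
seminorms, and vanishing at infinity when weighted. -/
def MemCV0 {d : ℕ} {E : Type*} [NormedAddCommGroup E] [NormedSpace ℝ E] {J : Type*}
    (k : ℕ∞) (Ω : Set (EuclideanSpace ℝ (Fin d)))
    (ν : J → ℕ → EuclideanSpace ℝ (Fin d) → ℝ)
    (f : EuclideanSpace ℝ (Fin d) → E) : Prop :=
  ContDiffOn ℝ k f Ω ∧
  (∀ (j : J) (l : ℕ), (l : ℕ∞) ≤ k →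
    ∃ M : ℝ, ∀ x ∈ Ω, ∀ β : Fin d → ℕ, (∑ n, β n) ≤ l → ‖mD β f x‖ * ν j l x ≤ M) ∧
  (∀ (j : J) (l : ℕ), (l : ℕ∞) ≤ k → ∀ ε > (0:ℝ),
    ∃ K : Set (EuclideanSpace ℝ (Fin d)), IsCompact K ∧ K ⊆ Ω ∧
      ∀ x ∈ Ω \ K, ∀ β : Fin d → ℕ, (∑ n, β n) ≤ l → ‖mD β f x‖ * ν j l x < ε)

/-!
Fix `δ` from the cut-off criterion and a bump `ρ` supported in `ball 0 (δ / 3)`. For a compact `K`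
with `K + closedBall 0 δ ⊆ Ω`, the convolution `ψ = ρ ⋆ 1_{K + closedBall 0 (2δ/3)}` is a cut-off
which equals `1` near `K`, is supported in `Ω`, and satisfies `|∂ᵗψ| ≤ ∫ |∂ᵗρ| ≤ C` with `C`
independent of `K`. By the Leibniz rule, away from the set where `ψ = 1`,
`|∂^β (f - ψ f)| ν ≤ (1 + 2^l C) sup_{γ ≤ β} |∂^γ f| ν`; so it suffices to take `K` from the
criterion for `ε / (1 + 2^l C)`.
-/

open scoped Convolution
open MeasureTheory Metric Set Filter Topology

/-- The ways of distributing the letters of `s` between two subwords: the index set of the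
Leibniz rule. -/
def List.splittings {α : Type*} : List α → List (List α × List α)
  | [] => [([], [])]
  | i :: s => (s.splittings.map fun p => (i :: p.1, p.2)) ++
      (s.splittings.map fun p => (p.1, i :: p.2))

lemma List.sublist_of_mem_splittings {α : Type*} {s : List α} {p : List α × List α}
    (hp : p ∈ s.splittings) : p.1.Sublist s ∧ p.2.Sublist s := by
  induction s generalizing p with
  | nil => simp_all [splittings]
  | cons i s ih =>
    simp only [splittings, List.mem_append, List.mem_map] at hp
    rcases hp with ⟨q, hq, rfl⟩ | ⟨q, hq, rfl⟩
    · exact ⟨(ih hq).1.cons_cons i, (ih hq).2.cons i⟩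
    · exact ⟨(ih hq).1.cons i, (ih hq).2.cons_cons i⟩

lemma List.length_splittings {α : Type*} (s : List α) : s.splittings.length = 2 ^ s.length := by
  induction s with
  | nil => rfl
  | cons i s ih => simp [splittings, ih, pow_succ, mul_two]

section PartialDerivatives

variable {d : ℕ} {E : Type*} [NormedAddCommGroup E] [NormedSpace ℝ E]
variable {Ω : Set (EuclideanSpace ℝ (Fin d))} {n : ℕ}

local notation "𝔼" => EuclideanSpace ℝ (Fin d)

/-- `pDList [i₁, …, iₙ] f = ∂_{i₁} ⋯ ∂_{iₙ} f`. -/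
noncomputable def pDList (s : List (Fin d)) (f : 𝔼 → E) : 𝔼 → E :=
  s.foldr pD f

@[simp] lemma pDList_nil (f : 𝔼 → E) : pDList [] f = f := rfl

@[simp] lemma pDList_cons (i : Fin d) (s : List (Fin d)) (f : 𝔼 → E) :
    pDList (i :: s) f = pD i (pDList s f) := rfl

lemma pDList_append (s t : List (Fin d)) (f : 𝔼 → E) :
    pDList (s ++ t) f = pDList s (pDList t f) := by
  simp [pDList, List.foldr_append]

lemma pDList_replicate (m : ℕ) (i : Fin d) (f : 𝔼 → E) :
    pDList (List.replicate m i) f = (pD i)^[m] f := by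
  induction m with
  | zero => rfl
  | succ m ih => rw [List.replicate_succ, pDList_cons, ih, Function.iterate_succ_apply']

/-- The directions of `∂^β`, in the order in which `mD` applies them. -/
def dirList (β : Fin d → ℕ) : List (Fin d) :=
  (List.finRange d).flatMap fun i => List.replicate (β i) i

lemma length_dirList (β : Fin d → ℕ) : (dirList β).length = ∑ i, β i := by
  simp [dirList, List.length_flatMap, Fin.sum_univ_def]

lemma mD_eq_pDList (β : Fin d → ℕ) (f : 𝔼 → E) : mD β f = pDList (dirList β) f := by
  rw [mD, Fin.foldr_eq_foldr_finRange, dirList]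
  induction List.finRange d with
  | nil => rfl
  | cons i L ih => rw [List.foldr_cons, List.flatMap_cons, pDList_append, pDList_replicate, ih]

lemma exists_eq_flatMap_replicate_of_sublist {L : List (Fin d)} (hL : L.Nodup) {β : Fin d → ℕ}
    {u : List (Fin d)} (hu : u.Sublist (L.flatMap fun i => List.replicate (β i) i)) :
    ∃ γ ≤ β, u = L.flatMap fun i => List.replicate (γ i) i := by
  induction L generalizing u with
  | nil => exact ⟨0, fun i => Nat.zero_le (β i), by simpa using hu⟩
  | cons i L ih =>
    rw [List.nodup_cons] at hL
    rw [List.flatMap_cons, List.sublist_append_iff] at hu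
    obtain ⟨u₁, u₂, rfl, h₁, h₂⟩ := hu
    obtain ⟨c, hc, rfl⟩ := List.sublist_replicate_iff.1 h₁
    obtain ⟨γ, hγ, rfl⟩ := ih hL.2 h₂
    refine ⟨Function.update γ i c, fun j => ?_, ?_⟩
    · rcases eq_or_ne j i with rfl | hj
      · simpa using hc
      · simpa [Function.update_of_ne hj] using hγ j
    · rw [List.flatMap_cons, Function.update_self]
      congr 1
      exact List.flatMap_congr fun j hj => by
        rw [Function.update_of_ne (ne_of_mem_of_not_mem hj hL.1)]

lemma exists_eq_dirList_of_sublist {β : Fin d → ℕ} {u : List (Fin d)}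
    (hu : u.Sublist (dirList β)) : ∃ γ ≤ β, u = dirList γ :=
  exists_eq_flatMap_replicate_of_sublist (List.nodup_finRange d) hu

lemma pDList_eventuallyEq {f g : 𝔼 → E} {x : 𝔼} (h : f =ᶠ[𝓝 x] g) (s : List (Fin d)) :
    pDList s f =ᶠ[𝓝 x] pDList s g := by
  induction s with
  | nil => exact h
  | cons i s ih => exact ih.fderiv.fun_comp fun L => L (EuclideanSpace.single i 1)

lemma pD_congr {i : Fin d} {f g : 𝔼 → E} {x : 𝔼} (h : f =ᶠ[𝓝 x] g) : pD i f x = pD i g x :=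
  (pDList_eventuallyEq h [i]).eq_of_nhds

lemma contDiffOn_pDList (hΩ : IsOpen Ω) {f : 𝔼 → E} {s : List (Fin d)} {m : ℕ}
    (hf : ContDiffOn ℝ (s.length + m : ℕ) f Ω) : ContDiffOn ℝ m (pDList s f) Ω := by
  induction s generalizing m with
  | nil => simpa using hf
  | cons i s ih =>
    have h : ContDiffOn ℝ (m + 1 : ℕ) (pDList s f) Ω :=
      ih (by simpa [Nat.add_right_comm, Nat.add_assoc] using hf)
    exact (h.fderiv_of_isOpen hΩ (by push_cast; rfl)).clm_apply contDiffOn_const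

lemma differentiableAt_pDList (hΩ : IsOpen Ω) {f : 𝔼 → E} (hf : ContDiffOn ℝ n f Ω)
    {s : List (Fin d)} (hs : s.length < n) {x : 𝔼} (hx : x ∈ Ω) :
    DifferentiableAt ℝ (pDList s f) x :=
  ((contDiffOn_pDList hΩ (m := 1) (hf.of_le (by exact_mod_cast hs))).differentiableOn
    one_ne_zero).differentiableAt (hΩ.mem_nhds hx)

lemma contDiff_pDList {f : 𝔼 → E} (hf : ContDiff ℝ (⊤ : ℕ∞) f) (s : List (Fin d)) :
    ContDiff ℝ (⊤ : ℕ∞) (pDList s f) := by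
  induction s with
  | nil => exact hf
  | cons i s ih => exact (ih.fderiv_right le_rfl).clm_apply contDiff_const

lemma pDList_zero (s : List (Fin d)) : pDList s (0 : 𝔼 → E) = 0 := by
  induction s with
  | nil => rfl
  | cons i s ih => ext x; simp [pD, ih]

lemma pD_sub {i : Fin d} {f g : 𝔼 → E} {x : 𝔼} (hf : DifferentiableAt ℝ f x)
    (hg : DifferentiableAt ℝ g x) : pD i (fun y => f y - g y) x = pD i f x - pD i g x := by
  simp [pD, fderiv_fun_sub hf hg]

lemma pD_smul {i : Fin d} {c : 𝔼 → ℝ} {f : 𝔼 → E} {x : 𝔼} (hc : DifferentiableAt ℝ c x)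
    (hf : DifferentiableAt ℝ f x) :
    pD i (fun y => c y • f y) x = c x • pD i f x + pD i c x • f x := by
  simp [pD, fderiv_fun_smul hc hf]

lemma pD_list_sum {ι : Type*} (i : Fin d) (L : List ι) (F : ι → 𝔼 → E) {x : 𝔼}
    (h : ∀ a ∈ L, DifferentiableAt ℝ (F a) x) :
    pD i (fun y => (L.map fun a => F a y).sum) x = (L.map fun a => pD i (F a) x).sum := by
  have hsum : HasFDerivAt (fun y => (L.map fun a => F a y).sum)
      (L.map fun a => fderiv ℝ (F a) x).sum x := by
    induction L with
    | nil => simpa using hasFDerivAt_const (0 : E) x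
    | cons a L ih =>
      simpa using (h a (by simp)).hasFDerivAt.fun_add (ih fun b hb => h b (by simp [hb]))
  simp only [pD, hsum.fderiv]
  exact map_list_sum (ContinuousLinearMap.apply ℝ E (EuclideanSpace.single i (1 : ℝ)))
    (L.map fun a => fderiv ℝ (F a) x) |>.trans (by simp [Function.comp_def])

lemma pDList_sub (hΩ : IsOpen Ω) {f g : 𝔼 → E} (hf : ContDiffOn ℝ n f Ω)
    (hg : ContDiffOn ℝ n g Ω) {s : List (Fin d)} (hs : s.length ≤ n) {x : 𝔼} (hx : x ∈ Ω) :
    pDList s (fun z => f z - g z) x = pDList s f x - pDList s g x := by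
  induction s generalizing x with
  | nil => rfl
  | cons i s ih =>
    have hs' : s.length < n := hs
    have h : pDList s (fun z => f z - g z) =ᶠ[𝓝 x] fun y => pDList s f y - pDList s g y :=
      eventually_of_mem (hΩ.mem_nhds hx) fun y hy => ih hs'.le hy
    rw [pDList_cons, pD_congr h, pD_sub (differentiableAt_pDList hΩ hf hs' hx)
      (differentiableAt_pDList hΩ hg hs' hx)]
    rfl

lemma pDList_smul (hΩ : IsOpen Ω) {ψ : 𝔼 → ℝ} {f : 𝔼 → E} (hψ : ContDiffOn ℝ n ψ Ω)
    (hf : ContDiffOn ℝ n f Ω) {s : List (Fin d)} (hs : s.length ≤ n) {x : 𝔼} (hx : x ∈ Ω) :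
    pDList s (fun z => ψ z • f z) x =
      (s.splittings.map fun p => pDList p.1 ψ x • pDList p.2 f x).sum := by
  induction s generalizing x with
  | nil => simp [List.splittings]
  | cons i s ih =>
    have hs' : s.length < n := hs
    have h : pDList s (fun z => ψ z • f z) =ᶠ[𝓝 x]
        fun y => (s.splittings.map fun p => pDList p.1 ψ y • pDList p.2 f y).sum :=
      eventually_of_mem (hΩ.mem_nhds hx) fun y hy => ih hs'.le hy
    have hψ' : ∀ t : List (Fin d), t.Sublist s → DifferentiableAt ℝ (pDList t ψ) x :=
      fun t ht => differentiableAt_pDList hΩ hψ (ht.length_le.trans_lt hs') hx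
    have hf' : ∀ t : List (Fin d), t.Sublist s → DifferentiableAt ℝ (pDList t f) x :=
      fun t ht => differentiableAt_pDList hΩ hf (ht.length_le.trans_lt hs') hx
    have hterm : ∀ p ∈ s.splittings, pD i (fun y => pDList p.1 ψ y • pDList p.2 f y) x =
        pDList p.1 ψ x • pDList (i :: p.2) f x + pDList (i :: p.1) ψ x • pDList p.2 f x :=
      fun p hp => pD_smul (hψ' _ (List.sublist_of_mem_splittings hp).1)
        (hf' _ (List.sublist_of_mem_splittings hp).2)
    rw [pDList_cons, pD_congr h,
      pD_list_sum i s.splittings (fun p y => pDList p.1 ψ y • pDList p.2 f y) fun p hp =>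
        (hψ' _ (List.sublist_of_mem_splittings hp).1).smul
          (hf' _ (List.sublist_of_mem_splittings hp).2),
      List.map_congr_left hterm, List.sum_map_add, add_comm]
    simp [List.splittings, Function.comp_def]

lemma norm_pDList_smul_mul_le (hΩ : IsOpen Ω) {ψ : 𝔼 → ℝ} {f : 𝔼 → E}
    (hψ : ContDiffOn ℝ n ψ Ω) (hf : ContDiffOn ℝ n f Ω) {s : List (Fin d)} (hs : s.length ≤ n)
    {x : 𝔼} (hx : x ∈ Ω) {w C a : ℝ} (hw : 0 ≤ w)
    (hC : ∀ t : List (Fin d), t.Sublist s → ‖pDList t ψ x‖ ≤ C)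
    (ha : ∀ u : List (Fin d), u.Sublist s → ‖pDList u f x‖ * w ≤ a) :
    ‖pDList s (fun z => ψ z • f z) x‖ * w ≤ 2 ^ s.length * (C * a) := by
  have hterm : ∀ p ∈ s.splittings, ‖pDList p.1 ψ x • pDList p.2 f x‖ * w ≤ C * a := by
    intro p hp
    obtain ⟨h₁, h₂⟩ := List.sublist_of_mem_splittings hp
    rw [norm_smul, mul_assoc]
    exact mul_le_mul (hC _ h₁) (ha _ h₂) (by positivity) ((norm_nonneg _).trans (hC _ h₁))
  rw [pDList_smul hΩ hψ hf hs hx]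
  calc ‖(s.splittings.map fun p => pDList p.1 ψ x • pDList p.2 f x).sum‖ * w
      ≤ (s.splittings.map fun p => ‖pDList p.1 ψ x • pDList p.2 f x‖).sum * w := by
        gcongr
        simpa [Function.comp_def] using
          List.le_sum_of_subadditive norm norm_zero.le norm_add_le
            (s.splittings.map fun p => pDList p.1 ψ x • pDList p.2 f x)
    _ = (s.splittings.map fun p => ‖pDList p.1 ψ x • pDList p.2 f x‖ * w).sum :=
        (List.sum_map_mul_right _ _ _).symm
    _ ≤ (s.splittings.map fun p => ‖pDList p.1 ψ x • pDList p.2 f x‖ * w).length • (C * a) :=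
        List.sum_le_card_nsmul _ _ fun y hy => by
          obtain ⟨p, hp, rfl⟩ := List.mem_map.1 hy
          exact hterm p hp
    _ = 2 ^ s.length * (C * a) := by simp [List.length_map, List.length_splittings]

lemma norm_mD_sub_smul_mul_le (hΩ : IsOpen Ω) {ψ : 𝔼 → ℝ} {f : 𝔼 → E}
    (hψ : ContDiffOn ℝ n ψ Ω) (hf : ContDiffOn ℝ n f Ω) {β : Fin d → ℕ} (hβ : ∑ i, β i ≤ n)
    {x : 𝔼} (hx : x ∈ Ω) {w C a : ℝ} (hw : 0 ≤ w)
    (hC : ∀ t : List (Fin d), t.length ≤ ∑ i, β i → ‖pDList t ψ x‖ ≤ C)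
    (ha : ∀ γ ≤ β, ‖mD γ f x‖ * w ≤ a) :
    ‖mD β (fun z => f z - ψ z • f z) x‖ * w ≤ (1 + 2 ^ (∑ i, β i) * C) * a := by
  have hs : (dirList β).length ≤ n := (length_dirList β).trans_le hβ
  have ha' : ∀ u : List (Fin d), u.Sublist (dirList β) → ‖pDList u f x‖ * w ≤ a := by
    intro u hu
    obtain ⟨γ, hγ, rfl⟩ := exists_eq_dirList_of_sublist hu
    simpa [mD_eq_pDList] using ha γ hγ
  have hψf := norm_pDList_smul_mul_le hΩ hψ hf hs hx hw
    (fun t ht => hC t (ht.length_le.trans (length_dirList β).le)) ha'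
  rw [length_dirList] at hψf
  rw [mD_eq_pDList, pDList_sub (g := fun z => ψ z • f z) hΩ hf (hψ.smul hf) hs hx]
  calc ‖pDList (dirList β) f x - pDList (dirList β) (fun z => ψ z • f z) x‖ * w
      ≤ ‖pDList (dirList β) f x‖ * w + ‖pDList (dirList β) (fun z => ψ z • f z) x‖ * w := by
        rw [← add_mul]; gcongr; exact norm_sub_le _ _
    _ ≤ a + 2 ^ (∑ i, β i) * (C * a) := add_le_add (ha' _ (List.Sublist.refl _)) hψf
    _ = (1 + 2 ^ (∑ i, β i) * C) * a := by ring

lemma HasCompactSupport.pDList {h : 𝔼 → E} (hh : HasCompactSupport h) (t : List (Fin d)) :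
    HasCompactSupport (pDList t h) := by
  induction t with
  | nil => exact hh
  | cons i t ih => exact ih.fderiv_apply ℝ _

lemma pD_convolution (i : Fin d) {h χ : 𝔼 → ℝ} (hh : ContDiff ℝ 1 h)
    (hcs : HasCompactSupport h) (hχ : LocallyIntegrable χ) :
    pD i (h ⋆[ContinuousLinearMap.lsmul ℝ ℝ] χ) = pD i h ⋆[ContinuousLinearMap.lsmul ℝ ℝ] χ := by
  funext x
  simp only [pD, (hcs.hasFDerivAt_convolution_left _ hh hχ x).fderiv]
  -- move the evaluation at `eᵢ` inside the convolution integral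
  have hflip : fderiv ℝ h ⋆[(ContinuousLinearMap.lsmul ℝ ℝ).precompL 𝔼] χ =
      χ ⋆[ContinuousLinearMap.precompR 𝔼 (ContinuousLinearMap.lsmul ℝ ℝ).flip] fderiv ℝ h :=
    convolution_flip _
  rw [hflip, convolution_precompR_apply _ hχ (hcs.fderiv ℝ)
    (hh.continuous_fderiv one_ne_zero), convolution_flip]
  rfl

lemma pDList_convolution (t : List (Fin d)) {h χ : 𝔼 → ℝ} (hh : ContDiff ℝ (⊤ : ℕ∞) h)
    (hcs : HasCompactSupport h) (hχ : LocallyIntegrable χ) :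
    pDList t (h ⋆[ContinuousLinearMap.lsmul ℝ ℝ] χ) =
      pDList t h ⋆[ContinuousLinearMap.lsmul ℝ ℝ] χ := by
  induction t with
  | nil => rfl
  | cons i t ih =>
    rw [pDList_cons, ih, pD_convolution i ((contDiff_pDList hh t).of_le (by simp))
      (hcs.pDList t) hχ]
    rfl

lemma norm_convolution_le_integral_norm {h χ : 𝔼 → ℝ} (hh : Integrable h)
    (hχ : ∀ y, ‖χ y‖ ≤ 1) (x : 𝔼) :
    ‖(h ⋆[ContinuousLinearMap.lsmul ℝ ℝ] χ) x‖ ≤ ∫ y, ‖h y‖ := by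
  rw [convolution_def]
  refine (norm_integral_le_integral_norm _).trans
    (integral_mono_of_nonneg (Eventually.of_forall fun _ => norm_nonneg _) hh.norm
      (Eventually.of_forall fun t => ?_))
  simpa using mul_le_of_le_one_right (norm_nonneg (h t)) (hχ (x - t))

lemma exists_cutoff_norm_pDList_le (ρ : ContDiffBump (0 : 𝔼)) {K : Set 𝔼} (hK : IsCompact K) :
    ∃ ψ : 𝔼 → ℝ, ContDiff ℝ (⊤ : ℕ∞) ψ ∧ HasCompactSupport ψ ∧
      tsupport ψ ⊆ K + closedBall 0 (3 * ρ.rOut) ∧ (∀ x, 0 ≤ ψ x ∧ ψ x ≤ 1) ∧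
      (∀ x ∈ K + ball 0 ρ.rOut, ψ x = 1) ∧
      ∀ t x, ‖pDList t ψ x‖ ≤ ∫ y, ‖pDList t (ρ.normed volume) y‖ := by
  set r := ρ.rOut
  have hr : 0 < r := ρ.rOut_pos
  set A := K + closedBall (0 : 𝔼) (2 * r)
  have hA : IsCompact A := hK.add (isCompact_closedBall _ _)
  set χ : 𝔼 → ℝ := A.indicator 1
  have hχ : LocallyIntegrable χ :=
    ((integrable_indicator_iff hA.measurableSet).2
      (integrableOn_const hA.measure_lt_top.ne)).locallyIntegrable
  have hχ0 : ∀ y, 0 ≤ χ y := Set.indicator_nonneg fun _ _ => zero_le_one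
  have hχ1 : ∀ y, ‖χ y‖ ≤ 1 := fun y =>
    (norm_indicator_le_norm_self _ y).trans (by simp)
  have hρ : ContDiff ℝ (⊤ : ℕ∞) (ρ.normed volume) := ρ.contDiff_normed
  have hρcs : HasCompactSupport (ρ.normed volume) := ρ.hasCompactSupport_normed
  set ψ := ρ.normed volume ⋆[ContinuousLinearMap.lsmul ℝ ℝ] χ
  have hbound : ∀ t x, ‖pDList t ψ x‖ ≤ ∫ y, ‖pDList t (ρ.normed volume) y‖ := fun t x => by
    rw [pDList_convolution t hρ hρcs hχ]
    exact norm_convolution_le_integral_norm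
      ((contDiff_pDList hρ t).continuous.integrable_of_hasCompactSupport (hρcs.pDList t)) hχ1 x
  have hsupp : tsupport ψ ⊆ K + closedBall 0 (3 * r) := by
    have hclosed : IsClosed (K + closedBall (0 : 𝔼) (3 * r)) :=
      (hK.add (isCompact_closedBall _ _)).isClosed
    refine closure_minimal ((support_convolution_subset _).trans ?_) hclosed
    calc Function.support (ρ.normed volume) + Function.support χ ⊆ closedBall 0 r + A := by
          rw [ρ.support_normed_eq]
          exact Set.add_subset_add ball_subset_closedBall Set.support_indicator_subset
      _ = K + closedBall 0 (3 * r) := by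
          rw [add_left_comm, closedBall_add_closedBall hr.le (by positivity), add_zero]
          ring_nf
  refine ⟨ψ, hρcs.contDiff_convolution_left _ hρ hχ, hρcs.convolution _ ?_, hsupp,
    fun x => ⟨integral_nonneg fun t => mul_nonneg (ρ.nonneg_normed t) (hχ0 _), ?_⟩, ?_, hbound⟩
  · exact HasCompactSupport.intro hA fun y hy => Set.indicator_of_notMem hy _
  · refine (Real.le_norm_self _).trans ((hbound [] x).trans_eq ?_)
    simp_rw [pDList_nil, Real.norm_of_nonneg (ρ.nonneg_normed _)]
    exact ρ.integral_normed
  · intro x hx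
    have hball : ball x r ⊆ A := by
      obtain ⟨c, hc, b, hb, rfl⟩ := hx
      intro y hy
      refine ⟨c, hc, y - c, mem_closedBall_zero_iff.2 ?_, add_sub_cancel c y⟩
      rw [mem_ball_zero_iff] at hb
      rw [mem_ball_iff_norm] at hy
      calc ‖y - c‖ = ‖(y - (c + b)) + b‖ := by rw [sub_add_eq_sub_sub, sub_add_cancel]
        _ ≤ ‖y - (c + b)‖ + ‖b‖ := norm_add_le _ _
        _ ≤ 2 * r := by linarith
    have hχx : ∀ y ∈ ball x r, χ y = 1 := fun y hy => Set.indicator_of_mem (hball hy) _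
    exact (ρ.normed_convolution_eq_right fun y hy =>
      (hχx y hy).trans (hχx x (mem_ball_self hr)).symm).trans (hχx x (mem_ball_self hr))

end PartialDerivatives

theorem stmt14_general {d : ℕ} {E : Type*} [NormedAddCommGroup E] [NormedSpace ℝ E]
    {J : Type*} (k : ℕ∞)
    (Ω : Set (EuclideanSpace ℝ (Fin d))) (hΩ : IsOpen Ω)
    (ν : J → ℕ → EuclideanSpace ℝ (Fin d) → ℝ)
    (hν_nonneg : ∀ j l x, 0 ≤ ν j l x)
    (hcutoff : ∀ f : EuclideanSpace ℝ (Fin d) → E, MemCV0 k Ω ν f →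
      ∀ (j : J) (l : ℕ), (l : ℕ∞) ≤ k → ∃ δ > (0:ℝ), ∀ ε > (0:ℝ),
        ∃ K : Set (EuclideanSpace ℝ (Fin d)), IsCompact K ∧ K ⊆ Ω ∧
          K + Metric.closedBall 0 δ ⊆ Ω ∧
          ∀ x ∈ Ω \ K, ∀ β : Fin d → ℕ, (∑ n, β n) ≤ l →
            ‖mD β f x‖ * ν j l x < ε) :
    ∀ f : EuclideanSpace ℝ (Fin d) → E, MemCV0 k Ω ν f →
      ∀ (j : J) (l : ℕ), (l : ℕ∞) ≤ k → ∀ ε > (0:ℝ),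
        ∃ ψ : EuclideanSpace ℝ (Fin d) → ℝ, ContDiff ℝ (⊤ : ℕ∞) ψ ∧
          HasCompactSupport ψ ∧ tsupport ψ ⊆ Ω ∧
          (∀ x, 0 ≤ ψ x ∧ ψ x ≤ 1) ∧
          ∀ x ∈ Ω, ∀ β : Fin d → ℕ, (∑ n, β n) ≤ l →
            ‖mD β (fun z => f z - ψ z • f z) x‖ * ν j l x ≤ ε := by
  intro f hf j l hl ε hε
  obtain ⟨δ, hδ, hcut⟩ := hcutoff f hf j l hl
  let ρ : ContDiffBump (0 : EuclideanSpace ℝ (Fin d)) := ⟨δ / 6, δ / 3, by linarith, by linarith⟩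
  obtain ⟨C, hC⟩ := ((List.finite_length_le (Fin d) l).image
    fun t => ∫ y, ‖pDList t (ρ.normed volume) y‖).bddAbove
  have hC₀ : 0 ≤ C := (integral_nonneg fun _ => norm_nonneg _).trans
    (hC (mem_image_of_mem _ (show [].length ≤ l from Nat.zero_le l)))
  have hpos : 0 < 1 + 2 ^ l * C := by positivity
  obtain ⟨K, hK, -, hKδ, hsmall⟩ := hcut (ε / (1 + 2 ^ l * C)) (by positivity)
  obtain ⟨ψ, hψ, hψc, hψK, hψ01, hψ1, hψD⟩ := exists_cutoff_norm_pDList_le ρ hK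
  have hψΩ : tsupport ψ ⊆ Ω := hψK.trans (by rwa [show 3 * ρ.rOut = δ by simp [ρ]; ring])
  refine ⟨ψ, hψ, hψc, hψΩ, hψ01, fun x hx β hβ => ?_⟩
  by_cases hxU : x ∈ K + ball 0 ρ.rOut
  · have hzero : (fun z => f z - ψ z • f z) =ᶠ[𝓝 x] 0 :=
      eventually_of_mem (isOpen_ball.add_left.mem_nhds hxU) fun y hy => by simp [hψ1 y hy]
    rw [mD_eq_pDList, (pDList_eventuallyEq hzero _).eq_of_nhds, pDList_zero]
    simpa using hε.le
  have hxK : x ∈ Ω \ K := ⟨hx, fun hxK => hxU ⟨x, hxK, 0, mem_ball_self ρ.rOut_pos, add_zero x⟩⟩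
  calc ‖mD β (fun z => f z - ψ z • f z) x‖ * ν j l x
      ≤ (1 + 2 ^ (∑ i, β i) * C) * (ε / (1 + 2 ^ l * C)) :=
        norm_mD_sub_smul_mul_le hΩ (hψ.contDiffOn.of_le (by exact_mod_cast le_top))
          (hf.1.of_le (by exact_mod_cast hl)) hβ hx (hν_nonneg j l x)
          (fun t ht => (hψD t x).trans (hC (mem_image_of_mem _ (ht.trans hβ))))
          fun γ hγ => (hsmall x hxK γ ((Finset.sum_le_sum fun i _ => hγ i).trans hβ)).le
    _ ≤ (1 + 2 ^ l * C) * (ε / (1 + 2 ^ l * C)) := by gcongr; exact one_le_two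
    _ = ε := mul_div_cancel₀ ε hpos.ne'

/-- cut-off density lemma: if the weights are locally bounded and
`CV^k_0(Ω,E)` satisfies the cut-off criterion, then every `f ∈ CV^k_0(Ω,E)` can be
approximated in each weighted seminorm by compactly supported functions, of the
specific form `ψ·f` with a smooth cut-off `0 ≤ ψ ≤ 1`. -/
theorem stmt14 {d : ℕ} {E : Type*} [NormedAddCommGroup E] [NormedSpace ℝ E]
    {J : Type*} (k : ℕ∞)
    (Ω : Set (EuclideanSpace ℝ (Fin d))) (hΩ : IsOpen Ω)
    (ν : J → ℕ → EuclideanSpace ℝ (Fin d) → ℝ)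
    (hν_nonneg : ∀ j l x, 0 ≤ ν j l x)
    (hν_locbdd : ∀ K : Set (EuclideanSpace ℝ (Fin d)), K ⊆ Ω → IsCompact K →
      ∀ (j : J) (l : ℕ), ∃ M : ℝ, ∀ x ∈ K, ν j l x ≤ M)
    (hcutoff : ∀ f : EuclideanSpace ℝ (Fin d) → E, MemCV0 k Ω ν f →
      ∀ (j : J) (l : ℕ), (l : ℕ∞) ≤ k → ∃ δ > (0:ℝ), ∀ ε > (0:ℝ),
        ∃ K : Set (EuclideanSpace ℝ (Fin d)), IsCompact K ∧ K ⊆ Ω ∧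
          K + Metric.closedBall 0 δ ⊆ Ω ∧
          ∀ x ∈ Ω \ K, ∀ β : Fin d → ℕ, (∑ n, β n) ≤ l →
            ‖mD β f x‖ * ν j l x < ε) :
    ∀ f : EuclideanSpace ℝ (Fin d) → E, MemCV0 k Ω ν f →
      ∀ (j : J) (l : ℕ), (l : ℕ∞) ≤ k → ∀ ε > (0:ℝ),
        ∃ ψ : EuclideanSpace ℝ (Fin d) → ℝ, ContDiff ℝ (⊤ : ℕ∞) ψ ∧
          HasCompactSupport ψ ∧ tsupport ψ ⊆ Ω ∧
          (∀ x, 0 ≤ ψ x ∧ ψ x ≤ 1) ∧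
          ∀ x ∈ Ω, ∀ β : Fin d → ℕ, (∑ n, β n) ≤ l →
            ‖mD β (fun z => f z - ψ z • f z) x‖ * ν j l x ≤ ε :=
  stmt14_general k Ω hΩ ν hν_nonneg hcutoff
end
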